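/- arXiv:2207.05830 — 3 statements merged into one kernel-verified Lean document; each statement's English description precedes it below -/
import Mathlib

section
/- Let I ⊆ ℝ be an open interval and (f_n) a sequence of C¹ real functions on I converging pointwise to a continuous function f on I. Assume the set of roots of f in I is finite and non-empty. Then sup{ d(r, roots(f_n · f_n')) : r ∈ roots(f) } → 0 as n → ∞, where d(r, ∅) := ∞ and d is the standard distance from a point to a set in ℝ. -/
open Filter Set

/-! Since `f_n f_n' = (f_n²)'/2`, it suffices to find an interior minimum of `f_n²` near each root
`r` of `F`. The roots of `F` are isolated, so there are non-roots `x₁ < r < x₂` within `ε` of `r`;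
by pointwise convergence `|f_n r| < |f_n x₁|` and `|f_n r| < |f_n x₂|` for large `n`, so `f_n²`
attains its minimum on `[x₁, x₂]` inside `(x₁, x₂)`. Finitely many roots make the bound uniform. -/

theorem exists_mul_deriv_eq_zero_of_abs_lt {g : ℝ → ℝ} {x₁ x₂ r : ℝ}
    (hc : ContinuousOn g (Icc x₁ x₂)) (hd : DifferentiableOn ℝ g (Ioo x₁ x₂))
    (hr : r ∈ Icc x₁ x₂) (h₁ : |g r| < |g x₁|) (h₂ : |g r| < |g x₂|) :
    ∃ c ∈ Ioo x₁ x₂, g c * deriv g c = 0 := by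
  have hends : ∀ z ∈ Icc x₁ x₂ \ Ioo x₁ x₂, g r ^ 2 < g z ^ 2 := by
    rw [Icc_sdiff_Ioo_same (hr.1.trans hr.2)]
    rintro z (rfl | rfl) <;> exact sq_lt_sq.2 ‹_›
  obtain ⟨c, hc_mem, hmin⟩ := isCompact_Icc.exists_isLocalMin_mem_open Ioo_subset_Icc_self
    (hc.pow 2) hr hends isOpen_Ioo
  have hg : HasDerivAt g (deriv g c) c :=
    (hd.differentiableAt (isOpen_Ioo.mem_nhds hc_mem)).hasDerivAt
  refine ⟨c, hc_mem, ?_⟩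
  simpa using hmin.hasDerivAt_eq_zero (hg.pow 2)

theorem eventually_exists_mul_deriv_eq_zero_near_root {ι : Type*} {l : Filter ι} {a b : ℝ}
    {f : ι → ℝ → ℝ} {F : ℝ → ℝ} (hf : ∀ i, DifferentiableOn ℝ (f i) (Ioo a b))
    (hconv : ∀ x ∈ Ioo a b, Tendsto (fun i => f i x) l (nhds (F x)))
    (hfin : {x ∈ Ioo a b | F x = 0}.Finite) {ε : ℝ} (hε : 0 < ε)
    {r : ℝ} (hr : r ∈ Ioo a b) (hFr : F r = 0) :
    ∀ᶠ i in l, ∃ x ∈ Ioo a b, f i x * deriv (f i) x = 0 ∧ |r - x| < ε := by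
  obtain ⟨x₁, ⟨hx₁_lo, hx₁r⟩, hFx₁⟩ :=
    ((Ioo_infinite (max_lt hr.1 (sub_lt_self r hε))).sdiff hfin).nonempty
  obtain ⟨x₂, ⟨hrx₂, hx₂_hi⟩, hFx₂⟩ :=
    ((Ioo_infinite (lt_min hr.2 (lt_add_of_pos_right r hε))).sdiff hfin).nonempty
  rw [max_lt_iff] at hx₁_lo
  rw [lt_min_iff] at hx₂_hi
  have hsub : Icc x₁ x₂ ⊆ Ioo a b := Icc_subset_Ioo hx₁_lo.1 hx₂_hi.1
  have hlim : ∀ x ∈ Ioo a b, Tendsto (fun i => |f i x|) l (nhds |F x|) :=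
    fun x hx => (hconv x hx).abs
  have hpos : ∀ x ∈ Ioo a b, x ∉ {x ∈ Ioo a b | F x = 0} → |F r| < |F x| := by
    intro x hx hx0
    rw [hFr, abs_zero, abs_pos]
    exact fun h => hx0 ⟨hx, h⟩
  have hx₁ : x₁ ∈ Ioo a b := hsub ⟨le_rfl, (hx₁r.trans hrx₂).le⟩
  have hx₂ : x₂ ∈ Ioo a b := hsub ⟨(hx₁r.trans hrx₂).le, le_rfl⟩
  filter_upwards [(hlim r hr).eventually_lt (hlim x₁ hx₁) (hpos x₁ hx₁ hFx₁),
    (hlim r hr).eventually_lt (hlim x₂ hx₂) (hpos x₂ hx₂ hFx₂)] with i h₁ h₂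
  obtain ⟨c, hc, hc0⟩ := exists_mul_deriv_eq_zero_of_abs_lt
    (((hf i).mono hsub).continuousOn) ((hf i).mono (Ioo_subset_Icc_self.trans hsub))
    ⟨hx₁r.le, hrx₂.le⟩ h₁ h₂
  refine ⟨c, hsub (Ioo_subset_Icc_self hc), hc0, abs_sub_lt_iff.2 ⟨?_, ?_⟩⟩ <;>
    linarith [hc.1, hc.2]

theorem stmt5_general (a b : ℝ) (f : ℕ → ℝ → ℝ) (F : ℝ → ℝ)
    (hf : ∀ n, ContDiffOn ℝ 1 (f n) (Set.Ioo a b))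
    (hconv : ∀ x ∈ Set.Ioo a b, Tendsto (fun n => f n x) atTop (nhds (F x)))
    (hfin : {x ∈ Set.Ioo a b | F x = 0}.Finite) :
    ∀ ε > 0, ∃ N : ℕ, ∀ n ≥ N, ∀ r ∈ Set.Ioo a b, F r = 0 →
      ∃ x ∈ Set.Ioo a b, f n x * deriv (f n) x = 0 ∧ |r - x| < ε := by
  intro ε hε
  have hroots : ∀ᶠ n in atTop, ∀ r ∈ {x ∈ Ioo a b | F x = 0},
      ∃ x ∈ Ioo a b, f n x * deriv (f n) x = 0 ∧ |r - x| < ε :=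
    (eventually_all_finite hfin).2 fun r hr =>
      eventually_exists_mul_deriv_eq_zero_near_root
        (fun n => (hf n).differentiableOn one_ne_zero) hconv hfin hε hr.1 hr.2
  obtain ⟨N, hN⟩ := eventually_atTop.1 hroots
  exact ⟨N, fun n hn r hr hFr => hN n hn r ⟨hr, hFr⟩⟩

/-- Let `I = (a,b)` be an open interval and `(f_n)` a sequence of `C¹` real
functions on `I` converging pointwise on `I` to a continuous function `F` with finitely many and
at least one root in `I`. Then the distance from each root of `F` to the root set of
`f_n ⬝ f_n'` tends to `0` uniformly over the roots of `F`: for every `ε > 0`, eventually every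
root `r` of `F` admits a point `x ∈ I` with `f_n x * f_n' x = 0` and `|r - x| < ε`. -/
theorem stmt5 (a b : ℝ) (f : ℕ → ℝ → ℝ) (F : ℝ → ℝ)
    (hf : ∀ n, ContDiffOn ℝ 1 (f n) (Set.Ioo a b))
    (hconv : ∀ x ∈ Set.Ioo a b, Tendsto (fun n => f n x) atTop (nhds (F x)))
    (hF : ContinuousOn F (Set.Ioo a b))
    (hfin : {x ∈ Set.Ioo a b | F x = 0}.Finite)
    (hne : {x ∈ Set.Ioo a b | F x = 0}.Nonempty) :
    ∀ ε > 0, ∃ N : ℕ, ∀ n ≥ N, ∀ r ∈ Set.Ioo a b, F r = 0 →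
      ∃ x ∈ Set.Ioo a b, f n x * deriv (f n) x = 0 ∧ |r - x| < ε :=
  stmt5_general a b f F hf hconv hfin
end

section
/- Define a semi-polynomial to be a real function on (0, ∞) of the form f(x) = Σ_{k=1}^n a_k x^{α_k}, where a_k, α_k are real numbers, all a_k ≠ 0, the α_k are pairwise distinct. Such a function f (with n ≥ 1) has only finitely many positive roots; moreover, the number of distinct positive roots of f is at most twice the number of sign changes in the sequence of coefficients a_k sorted by increasing exponent α_k. -/
/-!
Descartes' rule of signs, by Rolle's theorem. If the coefficients change sign between
positions `j` and `j + 1`, choose `β` strictly between `α j` and `α (j + 1)`. Then `x ^ (-β) f`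
has the same positive roots as `f`, and its derivative is again a semi-polynomial, with
coefficients `(α k - β) a k`; multiplying by `α k - β` flips the signs from position `j + 1` on,
so exactly the sign change at `j` disappears. By Rolle, `f` has at most one positive root more
than this derivative, so by induction the number of positive roots is at most the number of sign
changes. Without sign changes all terms `a k x ^ α k` have the same sign and there is no root.
-/

open Set

theorem finite_and_ncard_zeros_le_of_hasDerivAt {s : Set ℝ} (hs : s.OrdConnected)
    {f f' : ℝ → ℝ} (hf : ∀ x ∈ s, HasDerivAt f (f' x) x) (hf' : {x ∈ s | f' x = 0}.Finite) :
    {x ∈ s | f x = 0}.Finite ∧ {x ∈ s | f x = 0}.ncard ≤ {x ∈ s | f' x = 0}.ncard + 1 := by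
  have interleaved (t : Finset ℝ) (ht : ↑t ⊆ {x ∈ s | f x = 0}) :
      t.card ≤ hf'.toFinset.card + 1 := by
    refine Finset.card_le_of_interleaved fun x hx y hy hxy _ => ?_
    obtain ⟨⟨hxs, hfx⟩, ⟨hys, hfy⟩⟩ := And.intro (ht hx) (ht hy)
    have hsub : Icc x y ⊆ s := hs.out hxs hys
    obtain ⟨z, hz, hf'z⟩ := exists_hasDerivAt_eq_zero hxy
      (fun w hw => (hf w (hsub hw)).continuousAt.continuousWithinAt) (hfx.trans hfy.symm)
      (fun w hw => hf w (hsub (Ioo_subset_Icc_self hw)))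
    exact ⟨z, hf'.mem_toFinset.2 ⟨hsub (Ioo_subset_Icc_self hz), hf'z⟩, hz⟩
  rw [← encard_le_coe_iff_finite_ncard_le, ncard_eq_toFinset_card _ hf']
  by_contra! hlt
  obtain ⟨t, hts, htcard⟩ := exists_subset_encard_eq (Order.add_one_le_of_lt hlt)
  obtain ⟨t, rfl⟩ := (finite_of_encard_eq_coe htcard).exists_finset_coe
  have hle := interleaved t hts
  rw [encard_coe_eq_coe_finsetCard] at htcard
  norm_cast at htcard
  omega

def signChanges {R : Type*} [Mul R] [Zero R] [LT R] {n : ℕ} (a : Fin n → R) : Set (Fin n) :=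
  {i | ∃ h : (i : ℕ) + 1 < n, a i * a ⟨(i : ℕ) + 1, h⟩ < 0}

section SignChanges

variable {R : Type*} [CommRing R] [LinearOrder R] [IsStrictOrderedRing R] {n : ℕ}
  {a : Fin n → R}

theorem mul_pos_of_signChanges_eq_empty (ha : ∀ k, a k ≠ 0) (h : signChanges a = ∅) :
    ∀ (m : ℕ) (hm : m < n), 0 < a ⟨0, by omega⟩ * a ⟨m, hm⟩
  | 0, _ => mul_self_pos.2 (ha _)
  | m + 1, hm => by
    have hprev := mul_pos_of_signChanges_eq_empty ha h m (by omega)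
    have hstep : 0 < a ⟨m, by omega⟩ * a ⟨m + 1, hm⟩ :=
      (mul_ne_zero (ha _) (ha _)).lt_of_le' <| not_lt.1 fun hneg =>
        (eq_empty_iff_forall_notMem.1 h) ⟨m, by omega⟩ ⟨hm, hneg⟩
    have hsq : 0 < a ⟨m, by omega⟩ * a ⟨m, by omega⟩ := mul_self_pos.2 (ha _)
    nlinarith [mul_pos hprev hstep]

theorem signChanges_mul_eq_sdiff {c : Fin n → R} {j : Fin n} (hj : j ∈ signChanges a)
    (hneg : ∀ k ≤ j, c k < 0) (hpos : ∀ k, j < k → 0 < c k) :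
    signChanges (fun k => c k * a k) = signChanges a \ {j} := by
  have hc : ∀ (i : Fin n) (h : (i : ℕ) + 1 < n), i ≠ j → 0 < c i * c ⟨(i : ℕ) + 1, h⟩ := by
    intro i h hij
    rcases hij.lt_or_gt with hlt | hgt
    · exact mul_pos_of_neg_of_neg (hneg i hlt.le)
        (hneg _ (by simp only [Fin.le_def, Fin.lt_def] at hlt ⊢; omega))
    · exact mul_pos (hpos i hgt) (hpos _ (by simp only [Fin.lt_def] at hgt ⊢; omega))
  have hfactor (i : Fin n) (h : (i : ℕ) + 1 < n) :
      c i * a i * (c ⟨(i : ℕ) + 1, h⟩ * a ⟨(i : ℕ) + 1, h⟩) =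
        c i * c ⟨(i : ℕ) + 1, h⟩ * (a i * a ⟨(i : ℕ) + 1, h⟩) := by
    ring
  ext i
  constructor
  · rintro ⟨h, hi⟩
    rw [hfactor] at hi
    have hij : i ≠ j := by
      rintro rfl
      have hcj : c i * c ⟨(i : ℕ) + 1, h⟩ < 0 :=
        mul_neg_of_neg_of_pos (hneg i le_rfl) (hpos _ (by simp [Fin.lt_def]))
      exact (mul_pos_of_neg_of_neg hcj hj.2).not_gt hi
    exact ⟨⟨h, neg_of_mul_neg_right hi (hc i h hij).le⟩, hij⟩
  · rintro ⟨⟨h, hi⟩, hij⟩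
    exact ⟨h, by rw [hfactor]; exact mul_neg_of_pos_of_neg (hc i h hij) hi⟩

end SignChanges

theorem StrictMono.exists_separating_value {α : Type*} [LinearOrder α] [DenselyOrdered α]
    {n : ℕ} {f : Fin n → α} (hf : StrictMono f) (j : Fin n) (hj : (j : ℕ) + 1 < n) :
    ∃ β, (∀ k ≤ j, f k < β) ∧ ∀ k, j < k → β < f k := by
  obtain ⟨β, hjβ, hβj⟩ := exists_between (hf (show j < ⟨(j : ℕ) + 1, hj⟩ by simp [Fin.lt_def]))
  refine ⟨β, fun k hk => (hf.monotone hk).trans_lt hjβ, fun k hk => hβj.trans_le (hf.monotone ?_)⟩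
  simp only [Fin.le_def, Fin.lt_def] at hk ⊢
  omega

noncomputable def semiPoly {n : ℕ} (a α : Fin n → ℝ) (x : ℝ) : ℝ := ∑ k, a k * x ^ α k

def posRoots {n : ℕ} (a α : Fin n → ℝ) : Set ℝ := {x | 0 < x ∧ semiPoly a α x = 0}

section SemiPoly

variable {n : ℕ} (a α : Fin n → ℝ)

theorem hasDerivAt_semiPoly {x : ℝ} (hx : x ≠ 0) :
    HasDerivAt (semiPoly a α) (semiPoly (fun k => α k * a k) (fun k => α k - 1) x) x := by
  unfold semiPoly
  refine HasDerivAt.fun_sum fun k _ => ?_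
  exact ((Real.hasDerivAt_rpow_const (Or.inl hx)).const_mul (a k)).congr_deriv (by ring)

theorem semiPoly_eq_rpow_mul (β : ℝ) {x : ℝ} (hx : 0 < x) :
    semiPoly a α x = x ^ β * semiPoly a (fun k => α k - β) x := by
  simp only [semiPoly, Finset.mul_sum]
  refine Finset.sum_congr rfl fun k _ => ?_
  rw [mul_left_comm, ← Real.rpow_add hx, add_sub_cancel]

theorem posRoots_sub_const (β : ℝ) : posRoots a (fun k => α k - β) = posRoots a α := by
  ext x
  simp only [posRoots, mem_ofPred_eq, and_congr_right_iff]
  intro hx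
  rw [semiPoly_eq_rpow_mul a α β hx, mul_eq_zero, or_iff_right (Real.rpow_pos_of_pos hx β).ne']

variable {a}

theorem posRoots_eq_empty_of_signChanges_eq_empty (hn : 0 < n) (ha : ∀ k, a k ≠ 0)
    (h : signChanges a = ∅) : posRoots a α = ∅ := by
  refine eq_empty_iff_forall_notMem.2 fun x ⟨hx, hroot⟩ => ?_
  have hpos : 0 < a ⟨0, hn⟩ * semiPoly a α x := by
    rw [semiPoly, Finset.mul_sum]
    refine Finset.sum_pos (fun k _ => ?_) ⟨⟨0, hn⟩, Finset.mem_univ _⟩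
    rw [← mul_assoc]
    exact mul_pos (mul_pos_of_signChanges_eq_empty ha h k k.2) (Real.rpow_pos_of_pos hx _)
  rw [hroot, mul_zero] at hpos
  exact hpos.false

theorem finite_posRoots_and_ncard_le_signChanges (hn : 0 < n) (ha : ∀ k, a k ≠ 0)
    (hα : StrictMono α) :
    (posRoots a α).Finite ∧ (posRoots a α).ncard ≤ (signChanges a).ncard := by
  induction hm : (signChanges a).ncard generalizing a α with
  | zero =>
    rw [posRoots_eq_empty_of_signChanges_eq_empty α hn ha ((ncard_eq_zero).1 hm)]
    exact ⟨finite_empty, by simp⟩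
  | succ m ih =>
    obtain ⟨j, hj⟩ : (signChanges a).Nonempty := (ncard_pos).1 (by omega)
    obtain ⟨β, hlt, hgt⟩ := hα.exists_separating_value j hj.1
    have hneg (k : Fin n) (hk : k ≤ j) : α k - β < 0 := sub_neg.2 (hlt k hk)
    have hpos (k : Fin n) (hk : j < k) : 0 < α k - β := sub_pos.2 (hgt k hk)
    have hb (k : Fin n) : (α k - β) * a k ≠ 0 :=
      mul_ne_zero ((le_or_gt k j).elim (fun hk => (hneg k hk).ne) fun hk => (hpos k hk).ne')
        (ha k)
    obtain ⟨hfin, hcard⟩ := ih (fun k => α k - β - 1) hb (fun k l hkl => by simpa using hα hkl)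
      (by rw [signChanges_mul_eq_sdiff hj hneg hpos, ncard_sdiff_singleton_of_mem hj, hm]; rfl)
    have hrolle := finite_and_ncard_zeros_le_of_hasDerivAt ordConnected_Ioi
      (fun x hx => hasDerivAt_semiPoly a (fun k => α k - β) (ne_of_gt hx)) hfin
    rw [← posRoots_sub_const a α β]
    exact ⟨hrolle.1, hrolle.2.trans (Nat.add_le_add_right hcard 1)⟩

end SemiPoly

/-- A semi-polynomial `f(x) = Σ_{k} a_k x^{α_k}` on `(0, ∞)` (with all
`a_k ≠ 0` and the exponents `α_k` distinct and listed in increasing order) has finitely many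
positive roots, and the number of distinct positive roots is at most twice the number of sign
changes in the coefficient sequence `a`. -/
theorem stmt6 (n : ℕ) (hn : 1 ≤ n) (a α : Fin n → ℝ)
    (ha : ∀ k, a k ≠ 0) (hα : StrictMono α) :
    {x : ℝ | 0 < x ∧ ∑ k, a k * x ^ (α k) = 0}.Finite ∧
    {x : ℝ | 0 < x ∧ ∑ k, a k * x ^ (α k) = 0}.ncard ≤
      2 * {i : Fin n | ∃ h : (i : ℕ) + 1 < n, a i * a ⟨(i : ℕ) + 1, h⟩ < 0}.ncard := by
  obtain ⟨hfin, hcard⟩ := finite_posRoots_and_ncard_le_signChanges α hn ha hα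
  exact ⟨hfin, hcard.trans (Nat.le_mul_of_pos_left _ two_pos)⟩
end

section
/- Let G₁, G₂ be finite groups. Suppose the set of distinct dimensions of irreducible complex representations of G₁ has cardinality at most k, and that ζ_{G₁}(s) = ζ_{G₂}(s) for 4k + 1 distinct real values of s. Then ζ_{G₁} = ζ_{G₂} identically; equivalently, the multisets of irreducible representation dimensions of G₁ and G₂ coincide. -/
open CategoryTheory Module

/-- Isomorphism of irreducible representations of dimension `d`, as a setoid. -/
def irrSetoid (k G : Type) [Field k] [Group G] (d : ℕ) :
    Setoid {V : FDRep k G // Simple V ∧ finrank k V = d} where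
  r V W := Nonempty (V.1 ≅ W.1)
  iseqv := ⟨fun _ => ⟨Iso.refl _⟩, fun ⟨e⟩ => ⟨e.symm⟩, fun ⟨e⟩ ⟨f⟩ => ⟨e.trans f⟩⟩

/-- Isomorphism classes of irreducible representations of dimension `d`. -/
def IrrOfDim (k G : Type) [Field k] [Group G] (d : ℕ) := Quotient (irrSetoid k G d)

/-- The representation zeta function `ζ_G(s) = Σ_{ρ ∈ irr(G)} (dim ρ)^{-s}`. -/
noncomputable def repZeta (G : Type) [Group G] [Fintype G] (s : ℝ) : ℝ :=
  ∑ᶠ d : ℕ, (Nat.card (IrrOfDim ℂ G d) : ℝ) * (d : ℝ) ^ (-s)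

/-!
Write `a_d`, `b_d` for the numbers of irreducible representations of dimension `d` of `G₁`, `G₂`.
Then `ζ_{G₁}(s) - ζ_{G₂}(s) = ∑_d (a_d - b_d) exp (-s log d)` is an exponential sum in `-s`
whose positive coefficients sit at irreducible dimensions of `G₁`, so there are at most `k` of
them. Multiplying an exponential sum by `exp (-β t)` and differentiating multiplies the
coefficient at exponent `λ` by `λ - β`; doing this for `β = λ₀ - r` and `β = λ₀ + r`, with `r`
smaller than the gaps between exponents, makes the positive coefficient at `λ₀` negative and
leaves all other signs alone, while by Rolle's theorem it loses at most two zeros. So a nonzero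
exponential sum with `p` positive coefficients has at most `2p` real zeros, and since
`2k < 4k + 1` all the `a_d - b_d` vanish. The sums are finite because irreducible characters are
orthogonal, hence linearly independent in the finite-dimensional space `G → ℂ`.
-/

open Filter Topology

theorem exists_finset_zeros_deriv {f f' : ℝ → ℝ} (hf : ∀ x, HasDerivAt f (f' x) x)
    (Z : Finset ℝ) (hZ : ∀ x ∈ Z, f x = 0) :
    ∃ Z' : Finset ℝ, (∀ x ∈ Z', f' x = 0) ∧ Z.card ≤ Z'.card + 1 := by
  have hcont : Continuous f := continuous_iff_continuousAt.mpr fun x => (hf x).continuousAt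
  set P := (Z ×ˢ Z).filter (fun p => p.1 < p.2)
  have rolle : ∀ p ∈ P, ∃ z, p.1 < z ∧ z < p.2 ∧ f' z = 0 := by
    rintro ⟨x, y⟩ hp
    simp only [P, Finset.mem_filter, Finset.mem_product] at hp
    obtain ⟨⟨hx, hy⟩, hxy⟩ := hp
    obtain ⟨z, hz, hz'⟩ := exists_hasDerivAt_eq_zero hxy hcont.continuousOn
      (by rw [hZ x hx, hZ y hy]) fun z _ => hf z
    exact ⟨z, hz.1, hz.2, hz'⟩
  choose ξ hξ using rolle
  refine ⟨P.attach.image fun p => ξ p.1 p.2, ?_, Finset.card_le_of_interleaved ?_⟩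
  · simp only [Finset.mem_image, Finset.mem_attach, true_and, forall_exists_index]
    rintro _ p rfl
    exact (hξ p.1 p.2).2.2
  · intro x hx y hy hxy _
    have hp : (x, y) ∈ P := by simp [P, hx, hy, hxy]
    exact ⟨ξ (x, y) hp, Finset.mem_image_of_mem _ (Finset.mem_attach P ⟨_, hp⟩), (hξ _ hp).1,
      (hξ _ hp).2.1⟩

section ExpSum

variable {ι : Type*} (s : Finset ι) (e : ι → ℝ)

noncomputable def expSum (c : ι → ℝ) (t : ℝ) : ℝ := ∑ i ∈ s, c i * Real.exp (e i * t)

theorem hasDerivAt_expSum (c : ι → ℝ) (t : ℝ) :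
    HasDerivAt (expSum s e c) (expSum s e (fun i => c i * e i) t) t := by
  unfold expSum
  refine HasDerivAt.fun_sum fun i _ => ?_
  exact ((((hasDerivAt_id' t).const_mul (e i)).exp).const_mul (c i)).congr_deriv (by ring)

theorem exp_mul_expSum (c : ι → ℝ) (β t : ℝ) :
    Real.exp (-β * t) * expSum s e c t = expSum s (fun i => e i - β) c t := by
  simp only [expSum, Finset.mul_sum]
  refine Finset.sum_congr rfl fun i _ => ?_
  rw [mul_left_comm, ← Real.exp_add]
  congr 2
  ring

theorem exists_finset_zeros_expSum_mul_sub (c : ι → ℝ) (β : ℝ) (Z : Finset ℝ)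
    (hZ : ∀ t ∈ Z, expSum s e c t = 0) :
    ∃ Z' : Finset ℝ, (∀ t ∈ Z', expSum s e (fun i => c i * (e i - β)) t = 0) ∧
      Z.card ≤ Z'.card + 1 := by
  obtain ⟨Z', hZ', hcard⟩ := exists_finset_zeros_deriv
    (hasDerivAt_expSum s (fun i => e i - β) c) Z fun t ht => by
      rw [← exp_mul_expSum, hZ t ht, mul_zero]
  refine ⟨Z', fun t ht => ?_, hcard⟩
  have := hZ' t ht
  rw [← exp_mul_expSum] at this
  exact (mul_eq_zero.mp this).resolve_left (Real.exp_pos _).ne'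

theorem expSum_neg {c : ι → ℝ} (hc : ∀ i ∈ s, c i ≤ 0) (hc' : ∃ i ∈ s, c i ≠ 0) (t : ℝ) :
    expSum s e c t < 0 := by
  obtain ⟨i, hi, hci⟩ := hc'
  exact Finset.sum_neg' (fun j hj => mul_nonpos_of_nonpos_of_nonneg (hc j hj) (Real.exp_pos _).le)
    ⟨i, hi, mul_neg_of_neg_of_pos ((hc i hi).lt_of_ne hci) (Real.exp_pos _)⟩

theorem exists_pos_lt_abs_sub (x : ℝ) : ∃ r > 0, ∀ i ∈ s, e i ≠ x → r < |e i - x| := by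
  have h : ∀ᶠ r in 𝓝[>] (0 : ℝ), ∀ i ∈ s, e i ≠ x → r < |e i - x| :=
    (eventually_all_finset s).mpr fun i _ => nhdsWithin_le_nhds <| by
      by_cases hi : e i = x
      · exact Eventually.of_forall fun _ h => absurd hi h
      · filter_upwards [eventually_lt_nhds (abs_pos.mpr (sub_ne_zero.mpr hi))] with r hr _
        exact hr
  obtain ⟨r, hr, hr0⟩ := (h.and self_mem_nhdsWithin).exists
  exact ⟨r, hr0, hr⟩

theorem card_zeros_expSum_le (hinj : Set.InjOn e s) {c : ι → ℝ} (hc : ∃ i ∈ s, c i ≠ 0)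
    {Z : Finset ℝ} (hZ : ∀ t ∈ Z, expSum s e c t = 0) :
    Z.card ≤ 2 * (s.filter fun i => 0 < c i).card := by
  classical
  induction h : (s.filter fun i => 0 < c i).card generalizing c Z with
  | zero =>
    have hnonpos : ∀ i ∈ s, c i ≤ 0 := fun i hi =>
      not_lt.mp (Finset.filter_eq_empty_iff.mp (Finset.card_eq_zero.mp h) hi)
    rw [Finset.eq_empty_of_forall_notMem fun t ht => (expSum_neg s e hnonpos hc t).ne (hZ t ht)]
    rfl
  | succ n ih =>
    obtain ⟨i₀, hi₀⟩ := Finset.card_pos.mp (by rw [h]; exact n.succ_pos)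
    obtain ⟨hi₀s, hci₀⟩ := Finset.mem_filter.mp hi₀
    obtain ⟨r, hr, hsep⟩ := exists_pos_lt_abs_sub s e (e i₀)
    obtain ⟨Z₁, hZ₁, hcard₁⟩ := exists_finset_zeros_expSum_mul_sub s e c (e i₀ - r) Z hZ
    obtain ⟨Z₂, hZ₂, hcard₂⟩ := exists_finset_zeros_expSum_mul_sub s e _ (e i₀ + r) Z₁ hZ₁
    set c' := fun i => c i * (e i - (e i₀ - r)) * (e i - (e i₀ + r))
    have hc'_eq : ∀ i, c' i = c i * ((e i - e i₀) ^ 2 - r ^ 2) := fun i => by ring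
    have hc'i₀ : c' i₀ < 0 := by
      rw [hc'_eq, sub_self]
      nlinarith [mul_pos hci₀ (pow_pos hr 2)]
    have hfactor_pos : ∀ i ∈ s, i ≠ i₀ → 0 < (e i - e i₀) ^ 2 - r ^ 2 := fun i hi hne => by
      have := hsep i hi fun h => hne (hinj hi hi₀s h)
      nlinarith [sq_abs (e i - e i₀)]
    have hpos : (s.filter fun i => 0 < c' i) = (s.filter fun i => 0 < c i).erase i₀ := by
      ext i
      simp only [Finset.mem_filter, Finset.mem_erase]
      by_cases hi : i = i₀
      · subst hi
        simp [not_lt.mpr hc'i₀.le]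
      · simp only [hi, ne_eq, not_false_eq_true, true_and]
        refine and_congr_right fun hs => ?_
        rw [hc'_eq, mul_pos_iff_of_pos_right (hfactor_pos i hs hi)]
    have := ih ⟨i₀, hi₀s, hc'i₀.ne⟩ hZ₂ (by rw [hpos, Finset.card_erase_of_mem hi₀, h]; rfl)
    omega

end ExpSum

namespace FDRep

variable {G : Type} [Group G]

theorem finrank_pos_of_simple (V : FDRep ℂ G) [Simple V] : 0 < finrank ℂ V := by
  refine Nat.pos_of_ne_zero fun h => Simple.not_isZero V ?_
  have : Subsingleton V := finrank_zero_iff.mp h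
  rw [Limits.IsZero.iff_id_eq_zero]
  ext x
  exact Subsingleton.elim _ _

variable [Fintype G]

open scoped Classical in
theorem sum_character_mul_character_inv (V W : FDRep ℂ G) [Simple V] [Simple W] :
    ∑ g : G, V.character g * W.character g⁻¹ =
      if Nonempty (V ≅ W) then (Nat.card G : ℂ) else 0 := by
  have hG : (Nat.card G : ℂ) ≠ 0 := by exact_mod_cast Nat.card_pos.ne'
  have h := char_orthonormal V W
  rw [inv_mul_eq_iff_eq_mul₀ hG] at h
  rw [h]
  split_ifs <;> simp

variable (G) in
noncomputable def charPairing : LinearMap.BilinForm ℂ (G → ℂ) :=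
  LinearMap.mk₂ ℂ (fun f h => ∑ g, f g * h g⁻¹)
    (by simp [add_mul, Finset.sum_add_distrib]) (by simp [Finset.mul_sum, mul_assoc])
    (by simp [mul_add, Finset.sum_add_distrib]) (by simp [Finset.mul_sum, mul_left_comm])

theorem charPairing_apply (f h : G → ℂ) : charPairing G f h = ∑ g, f g * h g⁻¹ := rfl

variable (G) in
theorem finite_setOf_character_simple :
    {χ : G → ℂ | ∃ V : FDRep ℂ G, Simple V ∧ V.character = χ}.Finite := by
  set X := {χ : G → ℂ | ∃ V : FDRep ℂ G, Simple V ∧ V.character = χ}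
  have hortho : (charPairing G).iIsOrtho (Subtype.val : X → G → ℂ) := by
    refine LinearMap.BilinForm.iIsOrtho_def.mpr ?_
    rintro ⟨_, V, hV, rfl⟩ ⟨_, W, hW, rfl⟩ hVW
    have := sum_character_mul_character_inv V W
    rw [if_neg fun ⟨e⟩ => hVW (Subtype.ext (char_iso e))] at this
    rwa [charPairing_apply]
  have hself : ∀ χ : X, charPairing G χ χ ≠ 0 := by
    rintro ⟨_, V, hV, rfl⟩
    have := sum_character_mul_character_inv V V
    rw [if_pos ⟨Iso.refl V⟩] at this
    rw [charPairing_apply, this]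
    exact_mod_cast Nat.card_pos.ne'
  exact Set.finite_coe_iff.mp
    (LinearMap.BilinForm.linearIndependent_of_iIsOrtho hortho hself).finite

end FDRep

section IrrDims

variable {G : Type} [Group G]

variable (G) in
def irrDims : Set ℕ := {d | ∃ V : FDRep ℂ G, Simple V ∧ finrank ℂ V = d}

variable (G) in
theorem zero_notMem_irrDims : 0 ∉ irrDims G := by
  rintro ⟨V, hV, hd⟩
  exact (FDRep.finrank_pos_of_simple V).ne' hd

theorem mem_irrDims_of_card_irrOfDim_ne_zero {d : ℕ} (h : Nat.card (IrrOfDim ℂ G d) ≠ 0) :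
    d ∈ irrDims G := by
  obtain ⟨q⟩ := (Nat.card_ne_zero.mp h).1
  induction q using Quotient.inductionOn with
  | h V => exact ⟨V.1, V.2.1, V.2.2⟩

variable (G) [Fintype G]

theorem irrDims_finite : (irrDims G).Finite := by
  refine ((FDRep.finite_setOf_character_simple G).image fun χ => χ 1).preimage
    (Nat.cast_injective.injOn) |>.subset ?_
  rintro _ ⟨V, hV, rfl⟩
  exact ⟨V.character, ⟨V, hV, rfl⟩, FDRep.char_one V⟩

theorem repZeta_eq_sum {D : Finset ℕ} (hD : irrDims G ⊆ D) (s : ℝ) :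
    repZeta G s = ∑ d ∈ D, (Nat.card (IrrOfDim ℂ G d) : ℝ) * (d : ℝ) ^ (-s) := by
  refine finsum_eq_finsetSum_of_support_subset _ fun d hd => hD ?_
  exact mem_irrDims_of_card_irrOfDim_ne_zero (by exact_mod_cast left_ne_zero_of_mul hd)

end IrrDims

theorem injOn_log_natCast {D : Finset ℕ} (h₀ : 0 ∉ D) :
    Set.InjOn (fun d : ℕ => Real.log d) D := fun a ha b hb hab => by
  have hpos : ∀ n ∈ D, (n : ℝ) ∈ Set.Ioi 0 := fun n hn =>
    Set.mem_Ioi.mpr (by exact_mod_cast Nat.pos_of_ne_zero fun h => h₀ (h ▸ hn))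
  exact_mod_cast Real.log_injOn_pos (hpos a ha) (hpos b hb) hab

section Comparison

variable {G₁ G₂ : Type} [Group G₁] [Fintype G₁] [Group G₂]

theorem card_filter_sub_pos_le_ncard_irrDims (D : Finset ℕ) :
    (D.filter fun d =>
      0 < (Nat.card (IrrOfDim ℂ G₁ d) : ℝ) - Nat.card (IrrOfDim ℂ G₂ d)).card ≤
      (irrDims G₁).ncard := by
  rw [Set.ncard_eq_toFinset_card _ (irrDims_finite G₁)]
  refine Finset.card_le_card fun d hd => (Set.Finite.mem_toFinset _).mpr ?_
  refine mem_irrDims_of_card_irrOfDim_ne_zero fun h => ?_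
  have hpos := (Finset.mem_filter.mp hd).2
  rw [h, Nat.cast_zero, zero_sub, neg_pos] at hpos
  exact (Nat.cast_nonneg _).not_gt hpos

variable [Fintype G₂]

theorem repZeta_sub_repZeta_eq_expSum {D : Finset ℕ} (h₁ : irrDims G₁ ⊆ D)
    (h₂ : irrDims G₂ ⊆ D) (h₀ : 0 ∉ D) (s : ℝ) :
    repZeta G₁ s - repZeta G₂ s =
      expSum D (fun d => Real.log d)
        (fun d => (Nat.card (IrrOfDim ℂ G₁ d) : ℝ) - Nat.card (IrrOfDim ℂ G₂ d)) (-s) := by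
  rw [repZeta_eq_sum G₁ h₁, repZeta_eq_sum G₂ h₂, ← Finset.sum_sub_distrib, expSum]
  refine Finset.sum_congr rfl fun d hd => ?_
  have hd0 : (0 : ℝ) < d := by exact_mod_cast Nat.pos_of_ne_zero fun h => h₀ (h ▸ hd)
  rw [Real.rpow_def_of_pos hd0, sub_mul]

variable (G₁ G₂) in
theorem card_irrOfDim_eq_of_repZeta_eq {S : Finset ℝ} (hS : 2 * (irrDims G₁).ncard < S.card)
    (hagree : ∀ s ∈ S, repZeta G₁ s = repZeta G₂ s) (d : ℕ) :
    Nat.card (IrrOfDim ℂ G₁ d) = Nat.card (IrrOfDim ℂ G₂ d) := by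
  set D := ((irrDims_finite G₁).union (irrDims_finite G₂)).toFinset
  have h₁ : irrDims G₁ ⊆ D := fun d hd => (Set.Finite.mem_toFinset _).mpr (Or.inl hd)
  have h₂ : irrDims G₂ ⊆ D := fun d hd => (Set.Finite.mem_toFinset _).mpr (Or.inr hd)
  have h₀ : 0 ∉ D := fun h => ((Set.Finite.mem_toFinset _).mp h).elim
    (zero_notMem_irrDims G₁) (zero_notMem_irrDims G₂)
  set c : ℕ → ℝ := fun d => (Nat.card (IrrOfDim ℂ G₁ d) : ℝ) - Nat.card (IrrOfDim ℂ G₂ d)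
  have hzeros : ∀ t ∈ S.image Neg.neg, expSum D (fun d => Real.log d) c t = 0 := by
    simp only [Finset.mem_image, forall_exists_index, and_imp]
    rintro _ s hs rfl
    rw [← repZeta_sub_repZeta_eq_expSum h₁ h₂ h₀, hagree s hs, sub_self]
  have hc : ∀ d ∈ D, c d = 0 := by
    by_contra! ⟨d, hd, hcd⟩
    have hcard := card_zeros_expSum_le D _ (injOn_log_natCast h₀) ⟨d, hd, hcd⟩ hzeros
    rw [Finset.card_image_of_injective _ neg_injective] at hcard
    have hpos : (D.filter fun d => 0 < c d).card ≤ (irrDims G₁).ncard :=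
      card_filter_sub_pos_le_ncard_irrDims D
    omega
  by_cases hd : d ∈ D
  · exact_mod_cast sub_eq_zero.mp (hc d hd)
  · rw [not_imp_comm.mp mem_irrDims_of_card_irrOfDim_ne_zero fun h => hd (h₁ h),
      not_imp_comm.mp mem_irrDims_of_card_irrOfDim_ne_zero fun h => hd (h₂ h)]

end Comparison

/-- If `G₁` has at most `k` distinct irreducible representation dimensions and
`ζ_{G₁} = ζ_{G₂}` at `4k + 1` distinct real points, then `ζ_{G₁} = ζ_{G₂}` identically,
equivalently the multisets of irreducible dimensions coincide. -/
theorem stmt7 (G₁ G₂ : Type) [Group G₁] [Fintype G₁] [Group G₂] [Fintype G₂] (k : ℕ)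
    (hN : {d : ℕ | ∃ V : FDRep ℂ G₁, Simple V ∧ finrank ℂ V = d}.ncard ≤ k)
    (S : Finset ℝ) (hS : S.card = 4 * k + 1)
    (hagree : ∀ s ∈ S, repZeta G₁ s = repZeta G₂ s) :
    (∀ s : ℝ, repZeta G₁ s = repZeta G₂ s) ∧
    ∀ d : ℕ, Nat.card (IrrOfDim ℂ G₁ d) = Nat.card (IrrOfDim ℂ G₂ d) := by
  have hcard := card_irrOfDim_eq_of_repZeta_eq G₁ G₂ (S := S) (by unfold irrDims; omega) hagree
  exact ⟨fun s => by simp only [repZeta, hcard], hcard⟩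
end
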